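/- An element P of T^n(ℝ^d) with constant term 1 is group-like (i.e. P = exp(L) for some Lie polynomial L ∈ Lie^n(ℝ^d)) if and only if σ_{I⧢J}(P) = σ_I(P)·σ_J(P) for all words I, J with |I|+|J| ≤ n. -/

import Mathlib

open scoped BigOperators

section TruncatedTensorAlgebra

variable {K : Type*} [Field K] {d : ℕ}

/-- Concatenation (tensor) product on the tensor algebra, modelled as functions on words. -/
def tmul (f g : List (Fin d) → K) : List (Fin d) → K :=
  fun l => ∑ i ∈ Finset.range (l.length + 1), f (l.take i) * g (l.drop i)

/-- Truncation: kill all coordinates indexed by words of length `> n`. -/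
def trunc (n : ℕ) (f : List (Fin d) → K) : List (Fin d) → K :=
  fun l => if l.length ≤ n then f l else 0

/-- The product of the truncated tensor algebra `T^n(K^d)`. -/
def tmulT (n : ℕ) (f g : List (Fin d) → K) : List (Fin d) → K :=
  trunc n (tmul f g)

/-- The Lie bracket `[f,g] = f ⊗ g - g ⊗ f` in the truncated tensor algebra. -/
def lieT (n : ℕ) (f g : List (Fin d) → K) : List (Fin d) → K :=
  tmulT n f g - tmulT n g f

/-- The generator `e_i` of the tensor algebra. -/
def gen (i : Fin d) : List (Fin d) → K := fun l => if l = [i] then 1 else 0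

/-- The unit `1` of the tensor algebra. -/
def tone : List (Fin d) → K := fun l => if l = [] then 1 else 0

/-- `InLie d n K P` says that `P` belongs to the free Lie algebra `Lie^n(K^d)`, the
smallest Lie subalgebra of `T^n(K^d)` containing the generators `e_1, …, e_d`. -/
inductive InLie (d n : ℕ) (K : Type*) [Field K] : (List (Fin d) → K) → Prop
  | gen (i : Fin d) : InLie d n K (gen i)
  | zero : InLie d n K 0
  | add {f g : List (Fin d) → K} : InLie d n K f → InLie d n K g → InLie d n K (f + g)
  | smul (c : K) {f : List (Fin d) → K} : InLie d n K f → InLie d n K (c • f)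
  | bracket {f g : List (Fin d) → K} :
      InLie d n K f → InLie d n K g → InLie d n K (lieT n f g)

/-- Powers in the truncated tensor algebra. -/
def powT (n : ℕ) (f : List (Fin d) → K) : ℕ → (List (Fin d) → K)
  | 0 => tone
  | r + 1 => tmulT n f (powT n f r)

/-- The tensor exponential `exp(f) = ∑ f^{⊗ r}/r!` in `T^n(K^d)`. -/
noncomputable def texp (n : ℕ) (f : List (Fin d) → K) : List (Fin d) → K :=
  ∑ r ∈ Finset.range (n + 1), ((r.factorial : K)⁻¹) • powT n f r

/-- The tensor logarithm `log(1 + Q) = ∑_{r ≥ 1} (-1)^{r-1} Q^{⊗ r}/r` in `T^n(K^d)`. -/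
noncomputable def tlog (n : ℕ) (f : List (Fin d) → K) : List (Fin d) → K :=
  ∑ r ∈ Finset.Icc 1 n, (((-1 : K) ^ (r - 1)) / (r : K)) • powT n (f - tone) r

/-- The multiset of shuffles (interleavings) of two words. -/
def shuffles {α : Type*} : List α → List α → Multiset (List α)
  | [], l => {l}
  | l, [] => {l}
  | a :: as, b :: bs =>
      ((shuffles as (b :: bs)).map (a :: ·)) + ((shuffles (a :: as) bs).map (b :: ·))
  termination_by l₁ l₂ => l₁.length + l₂.length
  decreasing_by
    all_goals simp only [List.length_cons]
    all_goals omega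

/-- The shuffle linear form `σ_{I ⧢ J}` evaluated on a tensor `P`. -/
def shuffleForm (P : List (Fin d) → K) (I J : List (Fin d)) : K :=
  ((shuffles I J).map P).sum

end TruncatedTensorAlgebra

/-- A word is a Lyndon word if it is nonempty and strictly lexicographically smaller
than each of its proper rotations. -/
def IsLyndon {α : Type*} [LinearOrder α] (l : List α) : Prop :=
  l ≠ [] ∧ ∀ k : ℕ, 0 < k → k < l.length → l < l.rotate k

open Classical in
/-- The length of the longest proper Lyndon suffix of a word. -/
noncomputable def suffixLen {d : ℕ} (l : List (Fin d)) : ℕ :=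
  Nat.findGreatest (fun j => IsLyndon (l.drop (l.length - j))) (l.length - 1)

/-- Fuel-based recursion computing the Lyndon bracketing `b(I)`:
`b(i) = e_i` and `b(I) = [b(I₁), b(I₂)]` where `I = I₁I₂` with `I₂` the longest proper
Lyndon right factor of `I`. -/
noncomputable def bracketingFuel (K : Type*) [Field K] {d : ℕ} (n : ℕ) :
    ℕ → List (Fin d) → (List (Fin d) → K)
  | _, [i] => gen i
  | fuel + 1, l =>
      let m := min (max 1 (suffixLen l)) (l.length - 1)
      lieT n (bracketingFuel K n fuel (l.take (l.length - m)))
             (bracketingFuel K n fuel (l.drop (l.length - m)))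
  | 0, _ => 0

/-- The Lyndon bracketing `b(I)` of a word `I`, as an element of `T^n(K^d)`. -/
noncomputable def bracketing (K : Type*) [Field K] {d : ℕ} (n : ℕ) (l : List (Fin d)) :
    List (Fin d) → K :=
  bracketingFuel K n l.length l

/-!
Lie polynomials are primitive: `σ_{I⧢J}(L) = 0` for nonempty `I, J`. This holds for the
generators and survives brackets because the shuffle forms are compatible with concatenation,
`σ_{I⧢J}(f ⊗ g) = ∑ σ_{I'⧢J'}(f) σ_{I''⧢J''}(g)` over all splittings `I = I'I''`, `J = J'J''`.
For primitive `L` the same formula makes `σ_{I⧢J}(L^r)` binomial in `L^k(I)`, `L^l(J)`, and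
summing against `1/r!` gives `σ_{I⧢J}(exp L) = σ_I(exp L) σ_J(exp L)`.

Conversely, `L` is built degree by degree: if `exp L` agrees with `P` up to degree `m`, the
degree-`(m+1)` part `D` of `P - exp L` is primitive, and `exp (L + D)` agrees with `P` up to
degree `m + 1`. A homogeneous primitive `D` of degree `k` is a Lie polynomial by the
Dynkin–Specht–Wever lemma `r(D) = k D` for the right-normed bracketing `r`. It follows from the
expansion `r(w) = ∑ |u| (-1)^|v| u · rev(v)` over the deshuffles `(u, v)` of `w`, since
deshuffles are dual to shuffles and primitivity kills every term with `u, v ≠ []`.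
-/

open Finset

section TensorAlgebra

variable {K : Type*} [Field K] {d n : ℕ}

lemma trunc_apply_of_length_le (f : List (Fin d) → K) {z : List (Fin d)} (hz : z.length ≤ n) :
    trunc n f z = f z :=
  if_pos hz

lemma trunc_apply_of_lt_length (f : List (Fin d) → K) {z : List (Fin d)} (hz : n < z.length) :
    trunc n f z = 0 :=
  if_neg (by omega)

def tmulₗ : (List (Fin d) → K) →ₗ[K] (List (Fin d) → K) →ₗ[K] (List (Fin d) → K) :=
  LinearMap.mk₂ K tmul
    (fun f₁ f₂ g => by funext z; simp [tmul, add_mul, sum_add_distrib])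
    (fun c f g => by funext z; simp [tmul, mul_sum, mul_assoc])
    (fun f g₁ g₂ => by funext z; simp [tmul, mul_add, sum_add_distrib])
    (fun c f g => by funext z; simp [tmul, mul_sum, mul_left_comm])

@[simp]
lemma tmul_zero (f : List (Fin d) → K) : tmul f 0 = 0 := map_zero (tmulₗ f)

@[simp]
lemma zero_tmul (g : List (Fin d) → K) : tmul 0 g = 0 := map_zero (tmulₗ.flip g)

lemma add_tmul (f g h : List (Fin d) → K) : tmul (f + g) h = tmul f h + tmul g h :=
  map_add (tmulₗ.flip h) f g

lemma tmul_multiset_sum (f : List (Fin d) → K) (M : Multiset (List (Fin d) → K)) :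
    tmul f M.sum = (M.map (tmul f)).sum :=
  map_multiset_sum (tmulₗ f) M

lemma multiset_sum_tmul (M : Multiset (List (Fin d) → K)) (g : List (Fin d) → K) :
    tmul M.sum g = (M.map (tmul · g)).sum :=
  map_multiset_sum (tmulₗ.flip g) M

lemma tmul_nil (f g : List (Fin d) → K) : tmul f g [] = f [] * g [] := by
  simp [tmul]

lemma tmul_cons (f g : List (Fin d) → K) (a : Fin d) (w : List (Fin d)) :
    tmul f g (a :: w) = f [] * g (a :: w) + tmul (fun l => f (a :: l)) g w := by
  rw [tmul, List.length_cons, sum_range_succ', add_comm]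
  simp [tmul]

lemma tone_eq_single : (tone : List (Fin d) → K) = Pi.single [] 1 := by
  funext z; simp [tone, Pi.single_apply]

lemma gen_eq_single (a : Fin d) : (gen a : List (Fin d) → K) = Pi.single [a] 1 := by
  funext z; simp [gen, Pi.single_apply]

lemma tmul_single_single (u v : List (Fin d)) (x y : K) :
    tmul (Pi.single u x) (Pi.single v y) = Pi.single (u ++ v) (x * y) := by
  funext z
  simp only [tmul, Pi.single_apply]
  by_cases hz : z = u ++ v
  · subst hz
    rw [if_pos rfl, sum_eq_single u.length (fun i hi hne => ?_) (by simp)]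
    · simp
    · rw [if_neg fun h => hne ?_, zero_mul]
      have := congrArg List.length h
      simp only [List.length_take, List.length_append] at this
      simp only [mem_range, List.length_append] at hi
      omega
  · rw [if_neg hz]
    refine sum_eq_zero fun i _ => ?_
    by_cases hd : z.drop i = v
    · rw [if_neg fun ht => hz (by rw [← ht, ← hd, List.take_append_drop]), zero_mul]
    · rw [if_neg hd, mul_zero]

lemma tone_tmul (f : List (Fin d) → K) : tmul tone f = f := by
  funext z
  rw [tmul, sum_eq_single 0 (fun i hi hi0 => ?_) (by simp)]
  · simp [tone]
  · have := mem_range.mp hi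
    rw [tone, if_neg (by rw [List.take_eq_nil_iff]; rintro (h | rfl) <;> simp_all), zero_mul]

lemma tmul_tone (f : List (Fin d) → K) : tmul f tone = f := by
  funext z
  rw [tmul, sum_eq_single z.length (fun i hi hiz => ?_) (by simp)]
  · simp [tone]
  · have := mem_range.mp hi
    rw [tone, if_neg (by rw [List.drop_eq_nil_iff]; omega), mul_zero]

end TensorAlgebra

section Homogeneous

variable {K : Type*} [Field K] {d n : ℕ}

def IsHomogeneous (k : ℕ) (f : List (Fin d) → K) : Prop :=
  ∀ z : List (Fin d), z.length ≠ k → f z = 0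

lemma isHomogeneous_gen (a : Fin d) : IsHomogeneous 1 (gen a : List (Fin d) → K) := by
  intro z hz
  simp only [gen, ite_eq_right_iff]
  rintro rfl
  simp at hz

lemma IsHomogeneous.tmul {p q : ℕ} {f g : List (Fin d) → K} (hf : IsHomogeneous p f)
    (hg : IsHomogeneous q g) : IsHomogeneous (p + q) (tmul f g) := by
  intro z hz
  refine sum_eq_zero fun i hi => ?_
  have hi : i ≤ z.length := Nat.lt_succ_iff.mp (mem_range.mp hi)
  by_cases hp : (z.take i).length = p
  · rw [hg _ (by simp only [List.length_take, List.length_drop] at hp ⊢; omega), mul_zero]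
  · rw [hf _ hp, zero_mul]

lemma IsHomogeneous.trunc_eq {k : ℕ} {f : List (Fin d) → K} (hf : IsHomogeneous k f)
    (hk : k ≤ n) : trunc n f = f := by
  funext z
  by_cases hz : z.length ≤ n
  · exact trunc_apply_of_length_le f hz
  · rw [trunc_apply_of_lt_length f (by omega), hf z (by omega)]

end Homogeneous

section Shuffles

variable {α : Type*}

@[simp]
lemma shuffles_nil_left (l : List α) : shuffles [] l = {l} := by
  rw [shuffles]

@[simp]
lemma shuffles_nil_right (l : List α) : shuffles l [] = {l} := by
  cases l <;> simp [shuffles]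

lemma shuffles_cons_cons (a b : α) (as bs : List α) :
    shuffles (a :: as) (b :: bs) =
      (shuffles as (b :: bs)).map (a :: ·) + (shuffles (a :: as) bs).map (b :: ·) := by
  rw [shuffles]

lemma length_of_mem_shuffles {u v w : List α} (hw : w ∈ shuffles u v) :
    w.length = u.length + v.length := by
  induction u, v using shuffles.induct generalizing w with
  | case1 l => simp_all
  | case2 l _ => simp_all
  | case3 a as b bs ih₁ ih₂ =>
    rw [shuffles_cons_cons, Multiset.mem_add, Multiset.mem_map, Multiset.mem_map] at hw
    rcases hw with ⟨w', hw', rfl⟩ | ⟨w', hw', rfl⟩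
    · simp only [List.length_cons, ih₁ hw']; omega
    · simp only [List.length_cons, ih₂ hw']; omega

end Shuffles

section ShuffleForm

variable {K : Type*} [Field K] {d n : ℕ}

def shuffleFormₗ (I J : List (Fin d)) : (List (Fin d) → K) →ₗ[K] K where
  toFun f := shuffleForm f I J
  map_add' _ _ := Multiset.sum_map_add
  map_smul' _ _ := Multiset.sum_map_mul_left

@[simp]
lemma shuffleFormₗ_apply (f : List (Fin d) → K) (I J : List (Fin d)) :
    shuffleFormₗ I J f = shuffleForm f I J := rfl

@[simp]
lemma shuffleForm_nil_left (f : List (Fin d) → K) (J : List (Fin d)) :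
    shuffleForm f [] J = f J := by
  simp [shuffleForm]

@[simp]
lemma shuffleForm_nil_right (f : List (Fin d) → K) (I : List (Fin d)) :
    shuffleForm f I [] = f I := by
  simp [shuffleForm]

lemma shuffleForm_cons_cons (f : List (Fin d) → K) (a b : Fin d) (as bs : List (Fin d)) :
    shuffleForm f (a :: as) (b :: bs) =
      shuffleForm (fun w => f (a :: w)) as (b :: bs) +
        shuffleForm (fun w => f (b :: w)) (a :: as) bs := by
  simp [shuffleForm, shuffles_cons_cons, Multiset.map_map]

lemma shuffleForm_congr {f g : List (Fin d) → K} {I J : List (Fin d)}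
    (h : ∀ w : List (Fin d), w.length = I.length + J.length → f w = g w) :
    shuffleForm f I J = shuffleForm g I J :=
  congrArg Multiset.sum <| Multiset.map_congr rfl fun _ hw => h _ (length_of_mem_shuffles hw)

lemma shuffleForm_trunc (f : List (Fin d) → K) {I J : List (Fin d)}
    (hIJ : I.length + J.length ≤ n) : shuffleForm (trunc n f) I J = shuffleForm f I J :=
  shuffleForm_congr fun _ hw => trunc_apply_of_length_le f (by omega)

lemma shuffleForm_tone (I J : List (Fin d)) :
    shuffleForm (tone : List (Fin d) → K) I J = tone I * tone J := by
  match I, J with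
  | [], J => simp [tone]
  | a :: as, [] => simp [tone]
  | a :: as, b :: bs =>
    rw [shuffleForm_cons_cons]
    simp [tone, shuffleForm]

lemma IsHomogeneous.shuffleForm_eq_zero {k : ℕ} {f : List (Fin d) → K}
    (hf : IsHomogeneous k f) {I J : List (Fin d)} (hIJ : I.length + J.length ≠ k) :
    shuffleForm f I J = 0 :=
  (shuffleForm_congr (g := 0) fun w hw => hf w (by omega)).trans (map_zero (shuffleFormₗ I J))

end ShuffleForm

section Coproduct

variable {K : Type*} [Field K] {d n : ℕ}

/-- The pairing of `f ⊗ g` with the deconcatenation coproduct of `I ⧢ J`. -/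
def shuffleFormSplit (f g : List (Fin d) → K) (I J : List (Fin d)) : K :=
  ∑ i ∈ range (I.length + 1), ∑ j ∈ range (J.length + 1),
    shuffleForm f (I.take i) (J.take j) * shuffleForm g (I.drop i) (J.drop j)

lemma shuffleFormSplit_cons_cons (f g : List (Fin d) → K) (a b : Fin d) (as bs : List (Fin d)) :
    shuffleFormSplit f g (a :: as) (b :: bs) =
      f [] * shuffleForm g (a :: as) (b :: bs) +
        shuffleFormSplit (fun w => f (a :: w)) g as (b :: bs) +
        shuffleFormSplit (fun w => f (b :: w)) g (a :: as) bs := by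
  simp only [shuffleFormSplit, List.length_cons, sum_range_succ', List.take_succ_cons,
    List.drop_succ_cons, List.take_zero, List.drop_zero, shuffleForm_cons_cons f, add_mul,
    sum_add_distrib, shuffleForm_nil_left, shuffleForm_nil_right]
  ring

lemma shuffleForm_tmul (f g : List (Fin d) → K) (I J : List (Fin d)) :
    shuffleForm (tmul f g) I J = shuffleFormSplit f g I J := by
  induction I, J using shuffles.induct generalizing f with
  | case1 J => simp [shuffleFormSplit, tmul]
  | case2 I _ => simp [shuffleFormSplit, tmul]
  | case3 a as b bs ih₁ ih₂ =>
    have tmul_cons' : ∀ c, (fun w => tmul f g (c :: w)) =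
        f [] • (fun w => g (c :: w)) + tmul (fun l => f (c :: l)) g :=
      fun c => funext fun w => tmul_cons f g c w
    rw [shuffleForm_cons_cons, shuffleFormSplit_cons_cons, ← ih₁, ← ih₂, tmul_cons', tmul_cons',
      shuffleForm_cons_cons g]
    simp only [← shuffleFormₗ_apply, map_add, map_smul, smul_eq_mul]
    ring

end Coproduct

section Primitive

variable {K : Type*} [Field K] {d n : ℕ}

lemma sum_range_ite_take_eq_nil {α M : Type*} [AddCommMonoid M] (l : List α) (F : ℕ → M) :
    ∑ j ∈ range (l.length + 1), (if l.take j = [] then F j else 0) = F 0 := by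
  refine (sum_eq_single 0 (fun j hj hj0 => if_neg ?_) (by simp)).trans (by simp)
  have := mem_range.mp hj
  rw [List.take_eq_nil_iff]
  rintro (h | rfl) <;> simp_all

lemma sum_range_ite_drop_eq_nil {α M : Type*} [AddCommMonoid M] (l : List α) (F : ℕ → M) :
    ∑ i ∈ range (l.length + 1), (if l.drop i = [] then F i else 0) = F l.length := by
  refine (sum_eq_single l.length (fun i hi hil => if_neg ?_) (by simp)).trans (by simp)
  have := mem_range.mp hi
  rw [List.drop_eq_nil_iff]
  omega

def IsPrimitive (n : ℕ) (f : List (Fin d) → K) : Prop :=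
  f [] = 0 ∧ ∀ I J : List (Fin d), I ≠ [] → J ≠ [] → I.length + J.length ≤ n →
    shuffleForm f I J = 0

lemma IsPrimitive.shuffleForm_eq {f : List (Fin d) → K} (hf : IsPrimitive n f)
    {I J : List (Fin d)} (hIJ : I.length + J.length ≤ n) :
    shuffleForm f I J = (if J = [] then f I else 0) + (if I = [] then f J else 0) := by
  by_cases hI : I = [] <;> by_cases hJ : J = []
  · simp [hI, hJ, hf.1]
  · simp [hI, hJ]
  · simp [hI, hJ]
  · simp [hI, hJ, hf.2 I J hI hJ hIJ]

lemma IsPrimitive.shuffleFormSplit_eq {L : List (Fin d) → K} (hL : IsPrimitive n L)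
    (g : List (Fin d) → K) {I J : List (Fin d)} (hIJ : I.length + J.length ≤ n) :
    shuffleFormSplit L g I J =
      ∑ i ∈ range (I.length + 1), L (I.take i) * shuffleForm g (I.drop i) J +
        ∑ j ∈ range (J.length + 1), L (J.take j) * shuffleForm g I (J.drop j) := by
  have hterm : ∀ i ∈ range (I.length + 1), ∀ j ∈ range (J.length + 1),
      shuffleForm L (I.take i) (J.take j) * shuffleForm g (I.drop i) (J.drop j) =
        (if J.take j = [] then L (I.take i) * shuffleForm g (I.drop i) (J.drop j) else 0) +
          (if I.take i = [] then L (J.take j) * shuffleForm g (I.drop i) (J.drop j) else 0) := by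
    intro i _ j _
    rw [hL.shuffleForm_eq (by simp only [List.length_take]; omega)]
    split_ifs <;> ring
  rw [shuffleFormSplit, sum_congr rfl fun i hi => sum_congr rfl (hterm i hi)]
  simp only [sum_add_distrib]
  congr 1
  · simp only [sum_range_ite_take_eq_nil, List.drop_zero]
  · rw [sum_comm]
    simp only [sum_range_ite_take_eq_nil, List.drop_zero]

lemma IsPrimitive.shuffleFormSplit_eq_of_isPrimitive {f g : List (Fin d) → K}
    (hf : IsPrimitive n f) (hg : IsPrimitive n g) {I J : List (Fin d)} (hI : I ≠ []) (hJ : J ≠ [])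
    (hIJ : I.length + J.length ≤ n) :
    shuffleFormSplit f g I J = f I * g J + f J * g I := by
  have hleft : ∀ i ∈ range (I.length + 1), f (I.take i) * shuffleForm g (I.drop i) J =
      if I.drop i = [] then f (I.take i) * g J else 0 := by
    intro i _
    rw [hg.shuffleForm_eq (by simp only [List.length_drop]; omega)]
    simp [hJ]
  have hright : ∀ j ∈ range (J.length + 1), f (J.take j) * shuffleForm g I (J.drop j) =
      if J.drop j = [] then f (J.take j) * g I else 0 := by
    intro j _
    rw [hg.shuffleForm_eq (by simp only [List.length_drop]; omega)]
    simp [hI]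
  rw [hf.shuffleFormSplit_eq g hIJ, sum_congr rfl hleft, sum_congr rfl hright,
    sum_range_ite_drop_eq_nil, sum_range_ite_drop_eq_nil, List.take_length, List.take_length]

lemma IsPrimitive.lieT {f g : List (Fin d) → K} (hf : IsPrimitive n f) (hg : IsPrimitive n g) :
    IsPrimitive n (lieT n f g) := by
  refine ⟨by simp [_root_.lieT, tmulT, trunc, tmul_nil, hf.1], fun I J hI hJ hIJ => ?_⟩
  simp only [_root_.lieT, tmulT, ← shuffleFormₗ_apply, map_sub]
  simp only [shuffleFormₗ_apply, shuffleForm_trunc _ hIJ, shuffleForm_tmul,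
    hf.shuffleFormSplit_eq_of_isPrimitive hg hI hJ hIJ,
    hg.shuffleFormSplit_eq_of_isPrimitive hf hI hJ hIJ]
  ring

lemma InLie.isPrimitive {f : List (Fin d) → K} (hf : InLie d n K f) : IsPrimitive n f := by
  induction hf with
  | gen a =>
    refine ⟨by simp [_root_.gen], fun I J hI hJ _ => (isHomogeneous_gen a).shuffleForm_eq_zero ?_⟩
    have := List.length_pos_iff.mpr hI
    have := List.length_pos_iff.mpr hJ
    omega
  | zero => exact ⟨rfl, fun I J _ _ _ => map_zero (shuffleFormₗ I J)⟩
  | add _ _ ihf ihg =>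
    refine ⟨by simp [ihf.1, ihg.1], fun I J hI hJ hIJ => ?_⟩
    rw [← shuffleFormₗ_apply, map_add, shuffleFormₗ_apply, shuffleFormₗ_apply,
      ihf.2 I J hI hJ hIJ, ihg.2 I J hI hJ hIJ, add_zero]
  | smul c _ ih =>
    refine ⟨by simp [ih.1], fun I J hI hJ hIJ => ?_⟩
    rw [← shuffleFormₗ_apply, map_smul, shuffleFormₗ_apply, ih.2 I J hI hJ hIJ, smul_zero]
  | bracket _ _ ihf ihg => exact ihf.lieT ihg

end Primitive

section Exponential

variable {K : Type*} [Field K] {d n : ℕ}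

lemma powT_succ_apply (L : List (Fin d) → K) (k : ℕ) {z : List (Fin d)} (hz : z.length ≤ n) :
    powT n L (k + 1) z =
      ∑ i ∈ range (z.length + 1), L (z.take i) * powT n L k (z.drop i) :=
  trunc_apply_of_length_le _ hz

lemma powT_apply_of_length_lt {L : List (Fin d) → K} (hL : L [] = 0) {r : ℕ}
    {z : List (Fin d)} (hz : z.length < r) : powT n L r z = 0 := by
  induction r generalizing z with
  | zero => omega
  | succ r ih =>
    by_cases hzn : z.length ≤ n
    · rw [powT_succ_apply L r hzn]
      refine sum_eq_zero fun i hi => ?_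
      rcases Nat.eq_zero_or_pos i with rfl | hi0
      · simp [hL]
      · have := mem_range.mp hi
        rw [ih (by simp only [List.length_drop]; omega), mul_zero]
    · exact trunc_apply_of_lt_length _ (by omega)

lemma powT_nil {L : List (Fin d) → K} (hL : L [] = 0) (r : ℕ) :
    powT n L r [] = if r = 0 then 1 else 0 := by
  rcases Nat.eq_zero_or_pos r with rfl | hr
  · simp [powT, tone]
  · rw [powT_apply_of_length_lt hL (by simpa using hr), if_neg hr.ne']

lemma IsPrimitive.shuffleForm_powT {L : List (Fin d) → K} (hL : IsPrimitive n L) (r : ℕ)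
    {I J : List (Fin d)} (hIJ : I.length + J.length ≤ n) :
    shuffleForm (powT n L r) I J =
      ∑ k ∈ range (r + 1), (r.choose k : K) * (powT n L k I * powT n L (r - k) J) := by
  induction r generalizing I J with
  | zero => simp [powT, shuffleForm_tone]
  | succ r ih =>
    have hleft : ∑ i ∈ range (I.length + 1), L (I.take i) * shuffleForm (powT n L r) (I.drop i) J =
        ∑ k ∈ range (r + 1), (r.choose k : K) * (powT n L (k + 1) I * powT n L (r - k) J) := by
      calc _ = ∑ i ∈ range (I.length + 1), ∑ k ∈ range (r + 1), (r.choose k : K) *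
              (L (I.take i) * powT n L k (I.drop i) * powT n L (r - k) J) := by
            refine sum_congr rfl fun i hi => ?_
            rw [ih (by simp only [List.length_drop]; omega), mul_sum]
            exact sum_congr rfl fun k _ => by ring
        _ = _ := by
            rw [sum_comm]
            simp only [powT_succ_apply L _ (show I.length ≤ n by omega), sum_mul, mul_sum]
    have hright :
        ∑ j ∈ range (J.length + 1), L (J.take j) * shuffleForm (powT n L r) I (J.drop j) =
          ∑ k ∈ range (r + 1), (r.choose k : K) * (powT n L k I * powT n L (r + 1 - k) J) := by
      calc _ = ∑ j ∈ range (J.length + 1), ∑ k ∈ range (r + 1), (r.choose k : K) *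
              (powT n L k I * (L (J.take j) * powT n L (r - k) (J.drop j))) := by
            refine sum_congr rfl fun j hj => ?_
            rw [ih (by simp only [List.length_drop]; omega), mul_sum]
            exact sum_congr rfl fun k _ => by ring
        _ = _ := by
            rw [sum_comm]
            refine sum_congr rfl fun k hk => ?_
            rw [show r + 1 - k = r - k + 1 by have := mem_range.mp hk; omega,
              powT_succ_apply L _ (show J.length ≤ n by omega), mul_sum, mul_sum]
    rw [powT, tmulT, shuffleForm_trunc _ hIJ, shuffleForm_tmul, hL.shuffleFormSplit_eq _ hIJ,
      hleft, hright, sum_choose_succ_mul (fun i j => powT n L i I * powT n L j J), add_comm]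

lemma texp_apply (L : List (Fin d) → K) (z : List (Fin d)) :
    texp n L z = ∑ r ∈ range (n + 1), (r.factorial : K)⁻¹ * powT n L r z := by
  simp [texp, Finset.sum_apply]

lemma texp_nil {L : List (Fin d) → K} (hL : L [] = 0) : texp n L [] = 1 := by
  simp [texp_apply, powT_nil hL]

lemma texp_apply_of_lt_length (L : List (Fin d) → K) {z : List (Fin d)} (hz : n < z.length) :
    texp n L z = 0 := by
  refine (texp_apply L z).trans (sum_eq_zero fun r _ => ?_)
  cases r with
  | zero => simp [powT, tone, List.ne_nil_of_length_pos (by omega : 0 < z.length)]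
  | succ r => rw [powT, tmulT, trunc_apply_of_lt_length _ hz, mul_zero]

lemma IsPrimitive.shuffleForm_texp [CharZero K] {L : List (Fin d) → K} (hL : IsPrimitive n L)
    {I J : List (Fin d)} (hIJ : I.length + J.length ≤ n) :
    shuffleForm (texp n L) I J = texp n L I * texp n L J := by
  let a : ℕ → K := fun k => (k.factorial : K)⁻¹ * powT n L k I
  let b : ℕ → K := fun l => (l.factorial : K)⁻¹ * powT n L l J
  have hvanish : ∀ k l, n < k + l → a k * b l = 0 := by
    intro k l hkl
    rcases lt_or_ge I.length k with hk | hk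
    · simp [a, powT_apply_of_length_lt hL.1 hk]
    · simp [b, powT_apply_of_length_lt hL.1 (show J.length < l by omega)]
  calc shuffleForm (texp n L) I J
      = ∑ r ∈ range (n + 1), ∑ k ∈ range (r + 1), a k * b (r - k) := by
        rw [texp, ← shuffleFormₗ_apply, map_sum]
        refine sum_congr rfl fun r _ => ?_
        rw [map_smul, shuffleFormₗ_apply, hL.shuffleForm_powT r hIJ, smul_eq_mul, mul_sum]
        refine sum_congr rfl fun k hk => ?_
        rw [Nat.cast_choose K (Nat.lt_succ_iff.mp (mem_range.mp hk))]
        have : (r.factorial : K) ≠ 0 := Nat.cast_ne_zero.mpr r.factorial_ne_zero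
        simp only [a, b]
        field_simp
    _ = ∑ k ∈ range (n + 1), ∑ l ∈ range (n + 1 - k), a k * b l :=
        sum_range_diag_flip (n + 1) fun k l => a k * b l
    _ = ∑ k ∈ range (n + 1), ∑ l ∈ range (n + 1), a k * b l :=
        sum_congr rfl fun k _ => sum_subset (range_subset_range.mpr (by omega))
          fun l _ hl => hvanish k l (by simp only [mem_range] at hl; omega)
    _ = texp n L I * texp n L J := by rw [texp_apply, texp_apply, sum_mul_sum]

end Exponential

section Deshuffles

variable {α : Type*}

def deshuffles : List α → Multiset (List α × List α)
  | [] => {([], [])}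
  | a :: w =>
    (deshuffles w).map (Prod.map (a :: ·) id) + (deshuffles w).map (Prod.map id (a :: ·))

lemma length_add_length_of_mem_deshuffles {w : List α} {p : List α × List α}
    (hp : p ∈ deshuffles w) : p.1.length + p.2.length = w.length := by
  induction w generalizing p with
  | nil => simp_all [deshuffles]
  | cons a w ih =>
    simp only [deshuffles, Multiset.mem_add, Multiset.mem_map] at hp
    rcases hp with ⟨q, hq, rfl⟩ | ⟨q, hq, rfl⟩ <;>
      simp only [Prod.map_fst, Prod.map_snd, id_eq, List.length_cons, ← ih hq] <;> omega

variable [DecidableEq α]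

lemma count_map_cons (a : α) (M : Multiset (List α)) (l : List α) :
    (M.map (a :: ·)).count l = if l.head? = some a then M.count l.tail else 0 := by
  rcases l with _ | ⟨c, l⟩
  · simp
  · by_cases hac : a = c
    · subst hac
      simpa using Multiset.count_map_eq_count' _ M List.cons_injective l
    · simp [Ne.symm hac, hac]

lemma count_map_prodMap_cons_left (a : α) (M : Multiset (List α × List α)) (u v : List α) :
    (M.map (Prod.map (a :: ·) id)).count (u, v) =
      if u.head? = some a then M.count (u.tail, v) else 0 := by
  rcases u with _ | ⟨c, u⟩
  · simp
  · by_cases hac : a = c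
    · subst hac
      simpa using Multiset.count_map_eq_count' _ M
        (List.cons_injective.prodMap Function.injective_id) (u, v)
    · simp [Ne.symm hac, hac]

lemma count_map_prodMap_cons_right (a : α) (M : Multiset (List α × List α)) (u v : List α) :
    (M.map (Prod.map id (a :: ·))).count (u, v) =
      if v.head? = some a then M.count (u, v.tail) else 0 := by
  rcases v with _ | ⟨c, v⟩
  · simp
  · by_cases hac : a = c
    · subst hac
      simpa using Multiset.count_map_eq_count' _ M
        (Function.injective_id.prodMap List.cons_injective) (u, v)
    · simp [Ne.symm hac, hac]

lemma count_nil_shuffles (u v : List α) :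
    (shuffles u v).count [] = if u = [] ∧ v = [] then 1 else 0 := by
  match u, v with
  | [], v => simp [Multiset.count_singleton, eq_comm]
  | a :: u, [] => simp
  | a :: u, b :: v => simp [shuffles_cons_cons]

lemma count_cons_shuffles (a : α) (w u v : List α) :
    (shuffles u v).count (a :: w) =
      (if u.head? = some a then (shuffles u.tail v).count w else 0) +
        (if v.head? = some a then (shuffles u v.tail).count w else 0) := by
  match u, v with
  | [], v => cases v <;> simp [Multiset.count_singleton, eq_comm, ite_and]
  | c :: u, [] => simp [Multiset.count_singleton, eq_comm, ite_and]
  | c :: u, b :: v => simp [shuffles_cons_cons, count_map_cons, eq_comm]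

lemma count_deshuffles (w u v : List α) : (deshuffles w).count (u, v) = (shuffles u v).count w := by
  induction w generalizing u v with
  | nil => simp [deshuffles, Multiset.count_singleton, count_nil_shuffles]
  | cons a w ih =>
    rw [deshuffles, Multiset.count_add, count_map_prodMap_cons_left, count_map_prodMap_cons_right,
      count_cons_shuffles, ih, ih]

lemma single_append_reverse_apply {M : Type*} [AddCommMonoid M] (u v z : List α) (x : M) :
    (Pi.single (u ++ v.reverse) x : List α → M) z =
      ∑ i ∈ range (z.length + 1), if (u, v) = (z.take i, (z.drop i).reverse) then x else 0 := by
  rw [Pi.single_apply]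
  by_cases hz : z = u ++ v.reverse
  · subst hz
    rw [if_pos rfl, sum_eq_single u.length]
    · simp
    · refine fun i hmem hi => if_neg fun h => hi ?_
      have := congrArg (List.length ∘ Prod.fst) h
      simp only [Function.comp_apply, List.length_take, List.length_append,
        List.length_reverse] at this
      simp only [mem_range, List.length_append, List.length_reverse] at hmem
      omega
    · simp
  · rw [if_neg hz]
    refine (sum_eq_zero fun i _ => if_neg fun h => hz ?_).symm
    simp only [Prod.mk.injEq] at h
    rw [h.1, h.2, List.reverse_reverse, List.take_append_drop]

end Deshuffles

section Dynkin

variable {K : Type*} [Field K] {d n : ℕ}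

/-- For `c = 1` this is `(id ⋆ S)(w)` and for `c = id` the Dynkin operator `(Y ⋆ S)(w)`,
where `S` is the antipode and `Y` multiplies a word by its length. -/
def deshuffleSum (c : ℕ → K) (w : List (Fin d)) : List (Fin d) → K :=
  ((deshuffles w).map fun p =>
    Pi.single (p.1 ++ p.2.reverse) (c p.1.length * (-1) ^ p.2.length)).sum

lemma deshuffleSum_nil (c : ℕ → K) : deshuffleSum c ([] : List (Fin d)) = Pi.single [] (c 0) := by
  simp [deshuffleSum, deshuffles]

lemma deshuffleSum_cons (c : ℕ → K) (a : Fin d) (w : List (Fin d)) :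
    deshuffleSum c (a :: w) =
      tmul (gen a) (deshuffleSum (fun k => c (k + 1)) w) - tmul (deshuffleSum c w) (gen a) := by
  simp only [deshuffleSum, tmul_multiset_sum, multiset_sum_tmul, deshuffles, Multiset.map_add,
    Multiset.sum_add, sub_eq_add_neg, ← Multiset.sum_map_neg, Multiset.map_map]
  congr 2
  · refine Multiset.map_congr rfl fun p _ => ?_
    simp [gen_eq_single, tmul_single_single]
  · refine Multiset.map_congr rfl fun p _ => ?_
    simp [gen_eq_single, tmul_single_single, pow_succ, ← Pi.single_neg]

lemma deshuffleSum_add (c₁ c₂ : ℕ → K) (w : List (Fin d)) :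
    deshuffleSum (c₁ + c₂) w = deshuffleSum c₁ w + deshuffleSum c₂ w := by
  simp only [deshuffleSum, ← Multiset.sum_map_add, Pi.add_apply, add_mul, Pi.single_add]

lemma deshuffleSum_one (w : List (Fin d)) :
    deshuffleSum (1 : ℕ → K) w = if w = [] then tone else 0 := by
  induction w with
  | nil => simp [deshuffleSum_nil, tone_eq_single]
  | cons a w ih =>
    rw [deshuffleSum_cons, show (fun k => (1 : ℕ → K) (k + 1)) = 1 from rfl, ih,
      if_neg (List.cons_ne_nil a w)]
    split_ifs <;> simp [tmul_tone, tone_tmul]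

lemma isHomogeneous_deshuffleSum (c : ℕ → K) (w : List (Fin d)) :
    IsHomogeneous w.length (deshuffleSum c w) := by
  intro z hz
  rw [deshuffleSum, Pi.multiset_sum_apply, Multiset.map_map]
  refine Multiset.sum_eq_zero fun x hx => ?_
  obtain ⟨p, hp, rfl⟩ := Multiset.mem_map.mp hx
  have := length_add_length_of_mem_deshuffles hp
  simp only [Function.comp_apply, Pi.single_apply, ite_eq_right_iff]
  rintro rfl
  simp only [List.length_append, List.length_reverse] at hz
  omega

def rightNormedBracket (n : ℕ) : List (Fin d) → List (Fin d) → K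
  | [] => 0
  | [a] => gen a
  | a :: w => lieT n (gen a) (rightNormedBracket n w)

lemma inLie_rightNormedBracket (w : List (Fin d)) : InLie d n K (rightNormedBracket n w) := by
  induction w with
  | nil => exact InLie.zero
  | cons a w ih =>
    cases w with
    | nil => exact InLie.gen a
    | cons b w => exact InLie.bracket (InLie.gen a) ih

lemma deshuffleSum_natCast {w : List (Fin d)} (hw : w.length ≤ n) :
    deshuffleSum (Nat.cast : ℕ → K) w = rightNormedBracket n w := by
  induction w with
  | nil => simp [deshuffleSum_nil, rightNormedBracket]
  | cons a w ih =>
    have hsucc : (fun k => ((k + 1 : ℕ) : K)) = Nat.cast + 1 := by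
      funext k
      simp
    have hw' : w.length ≤ n := Nat.le_of_succ_le hw
    have hr := ih hw' ▸ isHomogeneous_deshuffleSum (Nat.cast : ℕ → K) w
    rw [deshuffleSum_cons, hsucc, deshuffleSum_add, deshuffleSum_one, ih hw']
    rcases w with _ | ⟨b, w⟩
    · simp [rightNormedBracket, tmul_tone]
    · simp only [reduceCtorEq, if_false, add_zero, rightNormedBracket, _root_.lieT, tmulT]
      rw [((isHomogeneous_gen a).tmul hr).trunc_eq (by simpa [add_comm] using hw),
        (hr.tmul (isHomogeneous_gen a)).trunc_eq (by simpa using hw)]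


lemma deshuffleSum_apply (c : ℕ → K) (w z : List (Fin d)) :
    deshuffleSum c w z = ∑ i ∈ range (z.length + 1),
      c i * (-1) ^ (z.length - i) * ((deshuffles w).count (z.take i, (z.drop i).reverse) : K) := by
  simp only [deshuffleSum, Pi.multiset_sum_apply, Multiset.map_map, Function.comp_def,
    single_append_reverse_apply, sum_eq_multiset_sum]
  rw [Multiset.sum_map_sum_map]
  refine congrArg Multiset.sum (Multiset.map_congr rfl fun i hi => ?_)
  rw [Multiset.sum_map_eq_nsmul_single (z.take i, (z.drop i).reverse) fun p hp _ => if_neg hp]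
  have : i ≤ z.length := Nat.lt_succ_iff.mp (mem_range.mp (mem_val.mp hi))
  simp [this, nsmul_eq_mul, mul_comm]

end Dynkin

section PrimitiveIsLie

variable {K : Type*} [Field K] {d n : ℕ}

noncomputable def wordsUpTo (d n : ℕ) : Finset (List (Fin d)) :=
  (List.finite_length_le (Fin d) n).toFinset

@[simp]
lemma mem_wordsUpTo {w : List (Fin d)} : w ∈ wordsUpTo d n ↔ w.length ≤ n :=
  Set.Finite.mem_toFinset _

lemma sum_mul_count_shuffles (x : List (Fin d) → K) {u v : List (Fin d)}
    (huv : u.length + v.length ≤ n) :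
    ∑ w ∈ wordsUpTo d n, x w * (shuffles u v).count w = shuffleForm x u v := by
  rw [shuffleForm, Finset.sum_multiset_map_count]
  refine (sum_subset (fun w hw => ?_) fun w _ hw => ?_).symm.trans
    (sum_congr rfl fun w _ => by rw [nsmul_eq_mul, mul_comm])
  · rw [mem_wordsUpTo, length_of_mem_shuffles (Multiset.mem_toFinset.mp hw)]
    exact huv
  · rw [Multiset.count_eq_zero.mpr (mt Multiset.mem_toFinset.mpr hw), Nat.cast_zero,
      mul_zero]

/-- Dynkin–Specht–Wever: the Dynkin operator multiplies a primitive element by its degree. -/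
lemma IsPrimitive.sum_mul_deshuffleSum {x : List (Fin d) → K} (hx : IsPrimitive n x)
    {z : List (Fin d)} (hz : z.length ≤ n) :
    ∑ w ∈ wordsUpTo d n, x w * deshuffleSum (Nat.cast : ℕ → K) w z = z.length * x z := by
  have hterm : ∀ i ∈ range (z.length + 1),
      ∑ w ∈ wordsUpTo d n, x w * ((i : K) * (-1) ^ (z.length - i) *
        (shuffles (z.take i) (z.drop i).reverse).count w) =
      if z.drop i = [] then (i : K) * (-1) ^ (z.length - i) * x (z.take i) else 0 := by
    intro i hi
    have hi : i ≤ z.length := Nat.lt_succ_iff.mp (mem_range.mp hi)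
    have hlen : (z.take i).length + (z.drop i).reverse.length ≤ n := by
      simp only [List.length_take, List.length_reverse, List.length_drop]
      omega
    simp only [mul_left_comm (x _), ← mul_sum, sum_mul_count_shuffles x hlen,
      hx.shuffleForm_eq hlen, List.reverse_eq_nil_iff, List.take_eq_nil_iff]
    rcases Nat.eq_zero_or_pos i with rfl | hi0
    · simp
    · split_ifs <;> simp_all [hi0.ne']
  simp only [deshuffleSum_apply, mul_sum, count_deshuffles]
  rw [sum_comm, sum_congr rfl hterm, sum_range_ite_drop_eq_nil]
  simp

lemma IsPrimitive.inLie [CharZero K] {x : List (Fin d) → K} (hx : IsPrimitive n x)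
    (hsupp : ∀ z : List (Fin d), n < z.length → x z = 0) : InLie d n K x := by
  suffices hx_eq : x = ∑ w ∈ wordsUpTo d n, ((w.length : K)⁻¹ * x w) • rightNormedBracket n w by
    rw [hx_eq]
    exact sum_induction _ (InLie d n K) (fun _ _ => InLie.add) InLie.zero
      fun w _ => InLie.smul _ (inLie_rightNormedBracket w)
  funext z
  have hterm : ∀ w ∈ wordsUpTo d n,
      (((w.length : K)⁻¹ * x w) • rightNormedBracket n w) z =
        (z.length : K)⁻¹ * (x w * deshuffleSum (Nat.cast : ℕ → K) w z) := by
    intro w hw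
    rw [Pi.smul_apply, smul_eq_mul, ← deshuffleSum_natCast (mem_wordsUpTo.mp hw)]
    by_cases hzw : z.length = w.length
    · rw [hzw]; ring
    · rw [isHomogeneous_deshuffleSum _ w z hzw]; ring
  rw [Finset.sum_apply, sum_congr rfl hterm, ← mul_sum]
  by_cases hzn : n < z.length
  · rw [hsupp z hzn]
    refine (mul_eq_zero_of_right _ (sum_eq_zero fun w hw => ?_)).symm
    rw [isHomogeneous_deshuffleSum _ w z (by rw [mem_wordsUpTo] at hw; omega), mul_zero]
  rw [hx.sum_mul_deshuffleSum (by omega)]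
  by_cases hz : z = []
  · simp [hz, hx.1]
  · have : (z.length : K) ≠ 0 := Nat.cast_ne_zero.mpr (mt List.eq_nil_of_length_eq_zero hz)
    field_simp

end PrimitiveIsLie

section DegreeByDegree

variable {K : Type*} [Field K] {d n : ℕ}

lemma tmul_apply_congr_right {L g g' : List (Fin d) → K} (hL : L [] = 0) {z : List (Fin d)}
    (h : ∀ y : List (Fin d), y.length < z.length → g y = g' y) : tmul L g z = tmul L g' z := by
  refine sum_congr rfl fun i hi => ?_
  rcases Nat.eq_zero_or_pos i with rfl | hi0
  · simp [hL]
  · have := mem_range.mp hi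
    rw [h _ (by simp only [List.length_drop]; omega)]

lemma tmul_apply_of_isHomogeneous {k : ℕ} {D : List (Fin d) → K}
    (hD : IsHomogeneous k D) (g : List (Fin d) → K) {z : List (Fin d)} (hz : z.length ≤ k) :
    tmul D g z = D z * g [] := by
  rw [tmul, sum_eq_single z.length]
  · simp
  · intro i hi hiz
    have := mem_range.mp hi
    rw [hD _ (by simp only [List.length_take]; omega), zero_mul]
  · simp

lemma powT_add_apply {m : ℕ} {L D : List (Fin d) → K} (hL : L [] = 0)
    (hD : IsHomogeneous (m + 1) D) (hmn : m + 1 ≤ n) (r : ℕ) {z : List (Fin d)}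
    (hz : z.length ≤ m + 1) :
    powT n (L + D) r z = powT n L r z + if r = 1 then D z else 0 := by
  induction r generalizing z with
  | zero => simp [powT]
  | succ r ih =>
    have hLD : (L + D) [] = 0 := by simp [hL, hD [] (by simp)]
    have hlower : ∀ y : List (Fin d), y.length < z.length → powT n (L + D) r y = powT n L r y :=
      fun y hy => by rw [ih (by omega), hD y (by omega), ite_self, add_zero]
    rw [powT_succ_apply _ _ (hz.trans hmn), powT_succ_apply _ _ (hz.trans hmn)]
    change tmul (L + D) _ z = tmul L _ z + _
    rw [add_tmul, Pi.add_apply, tmul_apply_congr_right hL hlower,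
      tmul_apply_of_isHomogeneous hD _ hz, powT_nil hLD]
    simp

lemma texp_add_apply {m : ℕ} {L D : List (Fin d) → K} (hL : L [] = 0)
    (hD : IsHomogeneous (m + 1) D) (hmn : m + 1 ≤ n) {z : List (Fin d)}
    (hz : z.length ≤ m + 1) : texp n (L + D) z = texp n L z + D z := by
  simp only [texp_apply, powT_add_apply hL hD hmn _ hz, mul_add, sum_add_distrib, mul_ite,
    mul_zero, sum_ite_eq', mem_range]
  simp [show 1 < n + 1 by omega]

def homogeneousPart (k : ℕ) (f : List (Fin d) → K) : List (Fin d) → K :=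
  fun z => if z.length = k then f z else 0

lemma isHomogeneous_homogeneousPart (k : ℕ) (f : List (Fin d) → K) :
    IsHomogeneous k (homogeneousPart k f) :=
  fun _ hz => if_neg hz

lemma isPrimitive_homogeneousPart_sub {m : ℕ} {P Q : List (Fin d) → K}
    (hP : ∀ I J : List (Fin d), I.length + J.length ≤ n → shuffleForm P I J = P I * P J)
    (hQ : ∀ I J : List (Fin d), I.length + J.length ≤ n → shuffleForm Q I J = Q I * Q J)
    (hPQ : ∀ z : List (Fin d), z.length ≤ m → P z = Q z) :
    IsPrimitive n (homogeneousPart (m + 1) (P - Q)) := by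
  refine ⟨if_neg (by simp), fun I J hI hJ hIJ => ?_⟩
  by_cases hlen : I.length + J.length = m + 1
  · have hI' := List.length_pos_iff.mpr hI
    have hJ' := List.length_pos_iff.mpr hJ
    rw [shuffleForm_congr (f := homogeneousPart (m + 1) (P - Q)) (g := P - Q)
        fun w hw => if_pos (hw.trans hlen),
      ← shuffleFormₗ_apply, map_sub, shuffleFormₗ_apply, shuffleFormₗ_apply, hP I J hIJ,
      hQ I J hIJ, hPQ I (by omega), hPQ J (by omega), sub_self]
  · exact (isHomogeneous_homogeneousPart _ _).shuffleForm_eq_zero hlen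

lemma exists_inLie_texp_eq_of_length_le [CharZero K] {P : List (Fin d) → K} (h1 : P [] = 1)
    (hP : ∀ I J : List (Fin d), I.length + J.length ≤ n → shuffleForm P I J = P I * P J)
    {m : ℕ} (hmn : m ≤ n) :
    ∃ L, InLie d n K L ∧ (∀ z : List (Fin d), m < z.length → L z = 0) ∧
      ∀ z : List (Fin d), z.length ≤ m → texp n L z = P z := by
  induction m with
  | zero =>
    refine ⟨0, InLie.zero, fun _ _ => rfl, fun z hz => ?_⟩
    rw [List.eq_nil_of_length_eq_zero (Nat.le_zero.mp hz), h1, texp_nil rfl]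
  | succ m ih =>
    obtain ⟨L, hL, hsupp, hagree⟩ := ih (by omega)
    set D := homogeneousPart (m + 1) (P - texp n L)
    have hD : IsHomogeneous (m + 1) D := isHomogeneous_homogeneousPart _ _
    have hDprim : IsPrimitive n D := isPrimitive_homogeneousPart_sub hP
      (fun I J hIJ => hL.isPrimitive.shuffleForm_texp hIJ) fun z hz => (hagree z hz).symm
    refine ⟨L + D, hL.add (hDprim.inLie fun z hz => hD z (by omega)),
      fun z hz => by simp [hsupp z (by omega), hD z (by omega)], fun z hz => ?_⟩
    rw [texp_add_apply hL.isPrimitive.1 hD hmn hz]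
    by_cases hzm : z.length = m + 1
    · simp [D, homogeneousPart, hzm]
    · rw [hD z hzm, add_zero, hagree z (by omega)]

end DegreeByDegree

/-- Group-like elements of `T^n(ℝ^d)` are characterized by multiplicativity of the
shuffle forms: `P` with constant term `1` equals `exp(L)` for some Lie polynomial
`L ∈ Lie^n(ℝ^d)` if and only if `σ_{I ⧢ J}(P) = σ_I(P)·σ_J(P)` for all words `I, J`
with `|I| + |J| ≤ n`. -/
theorem grouplike_iff_shuffle_multiplicative (d n : ℕ) (P : List (Fin d) → ℝ)
    (h1 : P [] = 1) (htr : ∀ l : List (Fin d), n < l.length → P l = 0) :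
    (∃ L : List (Fin d) → ℝ, InLie d n ℝ L ∧ P = texp n L) ↔
      ∀ I J : List (Fin d), I.length + J.length ≤ n →
        shuffleForm P I J = P I * P J := by
  constructor
  · rintro ⟨L, hL, rfl⟩ I J hIJ
    exact hL.isPrimitive.shuffleForm_texp hIJ
  · intro hP
    obtain ⟨L, hL, -, hagree⟩ := exists_inLie_texp_eq_of_length_le h1 hP le_rfl
    refine ⟨L, hL, funext fun z => ?_⟩
    by_cases hz : z.length ≤ n
    · exact (hagree z hz).symm
    · rw [htr z (by omega), texp_apply_of_lt_length L (by omega)]
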